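/- In the string crystal structure on $\mathbb{N}^N$ (for a reduced word $\ii$), if $f_a(x) = x + e_{\ell^x}$ where $\ell^x$ is minimal with $i_{\ell^x} = a$ and $\eta_{\ell^x}(x) = \varepsilon_a(x)$, then $\varepsilon_a(f_a(x)) = \varepsilon_a(x) + 1$ and the maximal index $\ell$ with $i_\ell = a$ and $\eta_\ell(f_a(x)) = \varepsilon_a(f_a(x))$ equals $\ell^x$; consequently $e_a(f_a(x)) = x$. -/
import Mathlib


def cartan (i j : ℕ) : ℤ :=
  if i = j then 2 else if i + 1 = j ∨ j + 1 = i then -1 else 0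

def eta (N : ℕ) (ii : Fin N → ℕ) (k : Fin N) (x : Fin N → ℤ) : ℤ :=
  x k + ∑ j ∈ Finset.univ.filter (fun j => k < j), cartan (ii k) (ii j) * x j

/-- `ε_a(x) = max{η_k(x) | i_k = a}`. -/
def epsA (N : ℕ) (ii : Fin N → ℕ) (a : ℕ)
    (ha : (Finset.univ.filter (fun k => ii k = a)).Nonempty) (x : Fin N → ℤ) : ℤ :=
  (Finset.univ.filter (fun k => ii k = a)).sup' ha (fun k => eta N ii k x)

lemma eta_add_single (N : ℕ) (ii : Fin N → ℕ) (k ℓ : Fin N) (x : Fin N → ℤ) :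
    eta N ii k (x + Pi.single ℓ 1) =
      eta N ii k x + (if k = ℓ then 1 else 0) +
        (if k < ℓ then cartan (ii k) (ii ℓ) else 0) := by
  unfold eta
  simp only [Pi.add_apply, Pi.single_apply, mul_add, Finset.sum_add_distrib]
  have h2 : ∑ j ∈ Finset.univ.filter (fun j => k < j),
      cartan (ii k) (ii j) * (if j = ℓ then (1:ℤ) else 0) =
      if k < ℓ then cartan (ii k) (ii ℓ) else 0 := by
    simp [mul_ite, Finset.sum_ite_eq']
  rw [h2]; ring

/-- In the string crystal, if `f_a(x) = x + e_{ℓ}` where `ℓ` is the minimal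
index with `i_ℓ = a` and `η_ℓ(x) = ε_a(x)`, then `ε_a(f_a(x)) = ε_a(x) + 1`,
the maximal index `k` with `i_k = a` and `η_k(f_a(x)) = ε_a(f_a(x))` is `ℓ`
itself, and consequently `e_a(f_a(x)) = x`. -/
theorem string_e_f (N : ℕ) (ii : Fin N → ℕ) (a : ℕ)
    (ha : (Finset.univ.filter (fun k => ii k = a)).Nonempty)
    (x : Fin N → ℤ) (ℓ : Fin N) (hℓa : ii ℓ = a)
    (hℓ : eta N ii ℓ x = epsA N ii a ha x)
    (hℓmin : ∀ k : Fin N, ii k = a → eta N ii k x = epsA N ii a ha x → ℓ ≤ k) :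
    epsA N ii a ha (x + Pi.single ℓ 1) = epsA N ii a ha x + 1 ∧
    (∀ k : Fin N, ii k = a →
      eta N ii k (x + Pi.single ℓ 1) = epsA N ii a ha (x + Pi.single ℓ 1) →
      k ≤ ℓ) ∧
    (∀ ℓ' : Fin N, ii ℓ' = a →
      eta N ii ℓ' (x + Pi.single ℓ 1) = epsA N ii a ha (x + Pi.single ℓ 1) →
      (∀ k : Fin N, ii k = a →
        eta N ii k (x + Pi.single ℓ 1) = epsA N ii a ha (x + Pi.single ℓ 1) →
        k ≤ ℓ') →
      x + Pi.single ℓ 1 - Pi.single ℓ' 1 = x) := by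
  set ε := epsA N ii a ha x with hε
  -- value at ℓ increases by 1
  have hetaℓ : eta N ii ℓ (x + Pi.single ℓ 1) = ε + 1 := by
    rw [eta_add_single]; simp [hℓ, lt_irrefl]
  -- values elsewhere
  have hbound : ∀ k : Fin N, ii k = a →
      eta N ii k (x + Pi.single ℓ 1) ≤ ε + 1 ∧
      (ℓ < k → eta N ii k (x + Pi.single ℓ 1) < ε + 1) := by
    intro k hk
    have hkε : eta N ii k x ≤ ε := by
      rw [hε]
      exact Finset.le_sup' (fun k => eta N ii k x) (by simp [hk])
    rcases eq_or_ne k ℓ with rfl | hne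
    · exact ⟨by rw [hetaℓ], fun h => absurd h (lt_irrefl _)⟩
    · rcases lt_or_gt_of_ne hne with hlt | hgt
      · -- k < ℓ : cartan = 2, but eta k x < ε
        have hstrict : eta N ii k x < ε := by
          rcases lt_or_eq_of_le hkε with h | h
          · exact h
          · exact absurd (hℓmin k hk h) (not_le.mpr hlt)
        have hc : cartan (ii k) (ii ℓ) = 2 := by simp [cartan, hk, hℓa]
        have : eta N ii k (x + Pi.single ℓ 1) = eta N ii k x + 2 := by
          rw [eta_add_single]; simp [hne, hlt, hc]
        constructor
        · linarith
        · intro h; exact absurd (h.trans hlt) (lt_irrefl ℓ)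
      · have : eta N ii k (x + Pi.single ℓ 1) = eta N ii k x := by
          rw [eta_add_single]; simp [hne, not_lt.mpr (le_of_lt hgt)]
        constructor
        · linarith
        · intro _; linarith
  have hε1 : epsA N ii a ha (x + Pi.single ℓ 1) = ε + 1 := by
    apply le_antisymm
    · apply Finset.sup'_le
      intro k hk
      simp only [Finset.mem_filter] at hk
      exact (hbound k hk.2).1
    · rw [← hetaℓ]
      exact Finset.le_sup' (fun k => eta N ii k (x + Pi.single ℓ 1)) (by simp [hℓa])
  refine ⟨hε1, ?_, ?_⟩
  · intro k hk hkmax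
    by_contra hc
    push_neg at hc
    have := (hbound k hk).2 hc
    rw [hkmax, hε1] at this
    exact lt_irrefl _ this
  · intro ℓ' hℓ'a hℓ'max hℓ'maxl
    have h1 : ℓ' ≤ ℓ := by
      by_contra hc
      push_neg at hc
      have := (hbound ℓ' hℓ'a).2 hc
      rw [hℓ'max, hε1] at this
      exact lt_irrefl _ this
    have h2 : ℓ ≤ ℓ' := hℓ'maxl ℓ hℓa (by rw [hetaℓ, hε1])
    have : ℓ' = ℓ := le_antisymm h1 h2
    subst this
    simp
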